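/- Let W ∈ ℂ[x_1,…,x_n] be a polynomial and let γ be a diagonal matrix acting on ℂⁿ with γ*W = W (i.e. W(γ·x) = W(x)). Let 𝔪_γ be the ideal generated by the variables x_j with γ_j ≠ 1, and write W = W_γ + f where W_γ = W|_{ℂⁿ_γ} (the sum of monomials in the fixed variables) and f ∈ 𝔪_γ. Then f ∈ (𝔪_γ)², and consequently for every j, the restriction to ℂⁿ_γ of ∂W/∂x_j equals ∂W_γ/∂x_j on ℂⁿ_γ (interpreting W_γ as a polynomial in the fixed variables, with ∂W_γ/∂x_j = 0 for non-fixed x_j). -/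

import Mathlib

open MvPolynomial

/-- The part of a polynomial `W` obtained by setting the non-fixed variables
(those with `γ_j ≠ 1`) to zero, i.e. the sum of the monomials of `W` involving only
the fixed variables: this is `W_γ = W|_{ℂⁿ_γ}`. -/
noncomputable def fixedPart (n : ℕ) (γ : Fin n → ℂ) (W : MvPolynomial (Fin n) ℂ) :
    MvPolynomial (Fin n) ℂ :=
  MvPolynomial.aeval (fun j => if γ j = 1 then (MvPolynomial.X j : MvPolynomial (Fin n) ℂ) else 0) W

/-!
Comparing coefficients in `W(γ·x) = W(x)` shows that every monomial `x^d` of `W` satisfies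
`∏ γ_j ^ d_j = 1`. A monomial of `W - W_γ` contains some non-fixed variable `x_i`; if it
contained no other one (counted with multiplicity), the product would reduce to `γ_i ≠ 1`.
So each monomial of `W - W_γ` is divisible by a product of two non-fixed variables, i.e.
`W - W_γ ∈ 𝔪_γ²`. A derivation maps `𝔪_γ²` into `𝔪_γ`, which vanishes on `ℂⁿ_γ`.
-/

open scoped Pointwise

namespace MvPolynomial

variable {σ R : Type*} [CommSemiring R]

theorem mem_ideal_span_X_image_sq {x : MvPolynomial σ R} {s : Set σ} :
    x ∈ Ideal.span (X '' s : Set (MvPolynomial σ R)) ^ 2 ↔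
      ∀ m ∈ x.support, ∃ i ∈ s, ∃ j ∈ s, Finsupp.single i 1 + Finsupp.single j 1 ≤ m := by
  have hprod : X (R := R) '' s * X (R := R) '' s =
      (fun m => monomial m (1 : R)) ''
        Set.image2 (fun i j => Finsupp.single i 1 + Finsupp.single j 1) s s := by
    rw [← Set.image2_mul, Set.image2_image_left, Set.image2_image_right, Set.image_image2]
    simp only [X, monomial_mul, one_mul]
  rw [sq, Ideal.span_mul_span', hprod, mem_ideal_span_monomial_image]
  simp only [Set.exists_mem_image2]

theorem aeval_C_mul_X_monomial (γ : σ → R) (u : σ →₀ ℕ) (a : R) :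
    aeval (fun j => C (γ j) * X j) (monomial u a) =
      monomial u (u.prod (fun j k => γ j ^ k) * a) := by
  rw [aeval_monomial, monomial_eq, algebraMap_eq]
  simp only [mul_pow, Finsupp.prod_mul, ← C_pow, map_finsuppProd, C_mul]
  ring

theorem coeff_aeval_C_mul_X (γ : σ → R) (p : MvPolynomial σ R) (d : σ →₀ ℕ) :
    coeff d (aeval (fun j => C (γ j) * X j) p) = d.prod (fun j k => γ j ^ k) * coeff d p := by
  classical
  induction p using MvPolynomial.induction_on' with
  | monomial u a =>
    rw [aeval_C_mul_X_monomial, coeff_monomial, coeff_monomial]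
    split_ifs with h
    · rw [h]
    · rw [mul_zero]
  | add p q hp hq => rw [map_add, coeff_add, hp, hq, coeff_add, mul_add]

theorem aeval_ite_X_zero_monomial (P : σ → Prop) [DecidablePred P] (u : σ →₀ ℕ) (a : R) :
    aeval (fun j => if P j then X j else (0 : MvPolynomial σ R)) (monomial u a) =
      if ∀ j ∈ u.support, P j then monomial u a else 0 := by
  rw [aeval_monomial]
  split_ifs with h
  · rw [monomial_eq, algebraMap_eq]
    congr 1
    exact Finsupp.prod_congr fun j hj => by rw [if_pos (h j hj)]
  · push Not at h
    obtain ⟨j, hj, hPj⟩ := h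
    rw [Finsupp.prod, Finset.prod_eq_zero hj
      (by rw [if_neg hPj, zero_pow (Finsupp.mem_support_iff.mp hj)]), mul_zero]

theorem coeff_aeval_ite_X_zero (P : σ → Prop) [DecidablePred P] (p : MvPolynomial σ R)
    (d : σ →₀ ℕ) :
    coeff d (aeval (fun j => if P j then X j else (0 : MvPolynomial σ R)) p) =
      if ∀ j ∈ d.support, P j then coeff d p else 0 := by
  classical
  induction p using MvPolynomial.induction_on' with
  | monomial u a =>
    rw [aeval_ite_X_zero_monomial]
    rcases eq_or_ne u d with rfl | h
    · split_ifs <;> simp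
    · split_ifs <;> simp [coeff_monomial, h]
  | add p q hp hq =>
    rw [map_add, coeff_add, hp, hq, coeff_add]
    split_ifs <;> simp

theorem prod_pow_eq_one_of_eval_mul_eq {R : Type*} [CommRing R] [IsDomain R] [Infinite R]
    {γ : σ → R} {p : MvPolynomial σ R}
    (hp : ∀ x : σ → R, eval (fun j => γ j * x j) p = eval x p)
    {d : σ →₀ ℕ} (hd : d ∈ p.support) : d.prod (fun j k => γ j ^ k) = 1 := by
  have hscale : aeval (fun j => C (γ j) * X j) p = p := MvPolynomial.funext fun x => by
    rw [← aeval_eq_eval, aeval_eq_bind₁, aeval_bind₁]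
    simpa using hp x
  have h := congrArg (coeff d) hscale
  rw [coeff_aeval_C_mul_X] at h
  exact (mul_eq_right₀ (mem_support_iff.mp hd)).mp h

end MvPolynomial

theorem Finsupp.exists_single_add_single_le_of_prod_pow_eq_one {σ M : Type*} [CommMonoid M]
    {γ : σ → M} {d : σ →₀ ℕ} (hd : d.prod (fun j k => γ j ^ k) = 1) {i : σ} (hi : γ i ≠ 1)
    (hdi : d i ≠ 0) : ∃ j, γ j ≠ 1 ∧ Finsupp.single i 1 + Finsupp.single j 1 ≤ d := by
  classical
  obtain ⟨e, rfl⟩ : ∃ e, d = Finsupp.single i 1 + e :=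
    ⟨d - Finsupp.single i 1, (add_tsub_cancel_of_le (Finsupp.single_le_iff.mpr
      (Nat.one_le_iff_ne_zero.mpr hdi))).symm⟩
  by_contra! he
  have he_fixed : e.prod (fun j k => γ j ^ k) = 1 := Finset.prod_eq_one fun j hj => by
    by_contra hj1
    refine he j (fun h => hj1 (by simp [h])) (add_le_add le_rfl ?_)
    exact Finsupp.single_le_iff.mpr (Nat.one_le_iff_ne_zero.mpr (Finsupp.mem_support_iff.mp hj))
  rw [Finsupp.prod_add_index' (fun _ => pow_zero _) (fun _ _ _ => pow_add _ _ _),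
    Finsupp.prod_single_index (h := fun j k => γ j ^ k) (pow_zero _), pow_one, he_fixed,
    mul_one] at hd
  exact hi hd

theorem Derivation.map_mem_of_mem_sq {R A : Type*} [CommSemiring R] [CommSemiring A]
    [Algebra R A] (D : Derivation R A A) {I : Ideal A} {f : A} (hf : f ∈ I ^ 2) : D f ∈ I := by
  rw [sq] at hf
  refine Submodule.mul_induction_on hf (fun a ha b hb => ?_)
    (fun _ _ => by rw [map_add]; exact add_mem)
  rw [D.leibniz, smul_eq_mul, smul_eq_mul]
  exact add_mem (I.mul_mem_right _ ha) (I.mul_mem_right _ hb)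

theorem sub_fixedPart_mem_span_X_sq {n : ℕ} {γ : Fin n → ℂ} {W : MvPolynomial (Fin n) ℂ}
    (hinv : ∀ x : Fin n → ℂ, eval (fun j => γ j * x j) W = eval x W) :
    W - fixedPart n γ W ∈ Ideal.span (X '' {j | γ j ≠ 1}) ^ 2 := by
  rw [mem_ideal_span_X_image_sq]
  intro m hm
  rw [mem_support_iff, coeff_sub, fixedPart, coeff_aeval_ite_X_zero] at hm
  split_ifs at hm with hfixed
  · exact absurd (sub_self _) hm
  push Not at hfixed
  obtain ⟨i, hi, hγi⟩ := hfixed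
  have hmW : m ∈ W.support := mem_support_iff.mpr (by simpa using hm)
  obtain ⟨j, hγj, hle⟩ := Finsupp.exists_single_add_single_le_of_prod_pow_eq_one
    (prod_pow_eq_one_of_eval_mul_eq hinv hmW) hγi (Finsupp.mem_support_iff.mp hi)
  exact ⟨i, hγi, j, hγj, hle⟩

/-- If `γ` is a diagonal matrix with `W(γ·x) = W(x)`, and `W = W_γ + f` with `W_γ` the sum of
monomials in the fixed variables, then `f` lies in the square of the ideal `𝔪_γ` generated by
the non-fixed variables; consequently, for every `j`, the restriction to the fixed subspace
`ℂⁿ_γ` of `∂W/∂x_j` equals that of `∂W_γ/∂x_j`. -/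
theorem invariant_poly_correction_in_square (n : ℕ) (γ : Fin n → ℂ)
    (W : MvPolynomial (Fin n) ℂ)
    (hinv : ∀ x : Fin n → ℂ, MvPolynomial.eval (fun j => γ j * x j) W = MvPolynomial.eval x W) :
    (W - fixedPart n γ W) ∈
      (Ideal.span {P : MvPolynomial (Fin n) ℂ | ∃ j, γ j ≠ 1 ∧ P = MvPolynomial.X j}) ^ 2 ∧
    ∀ (j : Fin n) (x : Fin n → ℂ), (∀ j', γ j' ≠ 1 → x j' = 0) →
      MvPolynomial.eval x (MvPolynomial.pderiv j W)
        = MvPolynomial.eval x (MvPolynomial.pderiv j (fixedPart n γ W)) := by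
  have hspan : {P : MvPolynomial (Fin n) ℂ | ∃ j, γ j ≠ 1 ∧ P = X j} = X '' {j | γ j ≠ 1} := by
    ext P
    simp [eq_comm]
  have hmem := sub_fixedPart_mem_span_X_sq hinv
  rw [hspan]
  refine ⟨hmem, fun j x hx => ?_⟩
  have hker : Ideal.span (X '' {j | γ j ≠ 1}) ≤ RingHom.ker (eval x) :=
    Ideal.span_le.mpr (by rintro _ ⟨j', hj', rfl⟩; simpa using hx j' hj')
  have hderiv := hker ((pderiv j).map_mem_of_mem_sq hmem)
  rwa [RingHom.mem_ker, map_sub, map_sub, sub_eq_zero] at hderiv
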